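/- arXiv:1011.2911 — 3 statements merged into one kernel-verified Lean document; each statement's English description precedes it below -/
import Mathlib

section
/- Let M⁺ and M⁻ be compact Polish spaces, c ∈ C(M⁺ × M⁻), and μ⁺, μ⁻ Borel probability measures on M⁺, M⁻. Then the Kantorovich minimum equals the dual supremum: min over γ ∈ Γ(μ⁺,μ⁻) of ∫ c dγ = sup over pairs (−u,−v) ∈ Lip_c of −∫ u dμ⁺ − ∫ v dμ⁻. -/
/-!
Weak duality is the integral of `-u x - v y ≤ c (x, y)` against a coupling. For the converse,
the value `p f = inf {∫ u dμ + ∫ v dν | f ≤ u ⊕ v}` of the dual problem over continuous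
potentials is a sublinear functional on `C(X × Y, ℝ)`, so Hahn–Banach gives a linear `L ≤ p`
with `L (-c) = p (-c)`. Such an `L` is positive and equals `∫ u dμ + ∫ v dν` on `u ⊕ v`, so by
Riesz–Markov–Kakutani it is integration against a coupling `γ`, and `∫ c dγ = -p (-c)` is at
most the dual supremum.
-/

open MeasureTheory Set

noncomputable section

/-- `γ` is a transport plan (coupling) between `μ` and `ν`. -/
def IsCoupling {X Y : Type*} [MeasurableSpace X] [MeasurableSpace Y]
    (γ : Measure (X × Y)) (μ : Measure X) (ν : Measure Y) : Prop :=
  γ.map Prod.fst = μ ∧ γ.map Prod.snd = ν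

open scoped Pointwise

theorem exists_linearMap_le_sublinear_eq {E : Type*} [AddCommGroup E] [Module ℝ E]
    (N : E → ℝ) (N_hom : ∀ c : ℝ, 0 < c → ∀ x, N (c • x) = c * N x)
    (N_add : ∀ x y, N (x + y) ≤ N x + N y) (x₀ : E) :
    ∃ g : E →ₗ[ℝ] ℝ, (∀ x, g x ≤ N x) ∧ g x₀ = N x₀ := by
  have N_zero : N 0 = 0 := by
    have := N_hom 2 two_pos 0
    rw [smul_zero] at this
    linarith
  let f : E →ₗ.[ℝ] ℝ := LinearPMap.mkSpanSingleton' x₀ (N x₀) fun c hc => by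
    rcases smul_eq_zero.mp hc with rfl | rfl <;> simp [N_zero]
  obtain ⟨g, hgf, hgN⟩ := exists_extension_of_le_sublinear f N N_hom N_add <| by
    rintro ⟨x, hx⟩
    obtain ⟨t, rfl⟩ := Submodule.mem_span_singleton.mp hx
    rw [LinearPMap.mkSpanSingleton'_apply, RingHom.id_apply, smul_eq_mul]
    rcases lt_trichotomy t 0 with ht | rfl | ht
    · have := N_add (t • x₀) ((-t) • x₀)
      rw [← add_smul, add_neg_cancel, zero_smul, N_zero, N_hom _ (neg_pos.mpr ht)] at this
      linarith
    · simp [N_zero]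
    · rw [N_hom t ht]
  exact ⟨g, hgN, (hgf ⟨x₀, Submodule.mem_span_singleton_self x₀⟩).trans
    (LinearPMap.mkSpanSingleton'_apply_self _ _ _ _)⟩

theorem ContinuousMap.integrable_of_compactSpace {Z E : Type*} [TopologicalSpace Z]
    [CompactSpace Z] [MeasurableSpace Z] [OpensMeasurableSpace Z] [NormedAddCommGroup E]
    {μ : Measure Z} [IsFiniteMeasure μ] (f : C(Z, E)) : Integrable f μ :=
  f.continuous.integrable_of_hasCompactSupport (.of_compactSpace f)

theorem ContinuousMap.exists_measure_integral_eq_of_nonneg {Z : Type*} [TopologicalSpace Z]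
    [T2Space Z] [CompactSpace Z] [MeasurableSpace Z] [BorelSpace Z] (L : C(Z, ℝ) →ₗ[ℝ] ℝ)
    (hL : ∀ f, 0 ≤ f → 0 ≤ L f) :
    ∃ γ : Measure Z, IsFiniteMeasure γ ∧ ∀ f : C(Z, ℝ), ∫ z, f z ∂γ = L f := by
  let Λ : CompactlySupportedContinuousMap Z ℝ →ₚ[ℝ] ℝ :=
    PositiveLinearMap.mk₀
      { toFun g := L g.toContinuousMap
        map_add' g g' := L.map_add _ _
        map_smul' c g := L.map_smul c _ }
      fun g hg => hL _ hg
  exact ⟨RealRMK.rieszMeasure Λ, inferInstance, fun f =>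
    RealRMK.integral_rieszMeasure Λ (CompactlySupportedContinuousMap.continuousMapEquiv f)⟩

namespace IsCoupling

variable {X Y : Type*} [MeasurableSpace X] [MeasurableSpace Y]
  {γ : Measure (X × Y)} {μ : Measure X} {ν : Measure Y}

theorem isProbabilityMeasure (hγ : IsCoupling γ μ ν) [IsProbabilityMeasure μ] :
    IsProbabilityMeasure γ := by
  constructor
  rw [← preimage_univ (f := Prod.fst), ← Measure.map_apply measurable_fst .univ, hγ.1,
    measure_univ]

theorem integrable_comp_fst (hγ : IsCoupling γ μ ν) {u : X → ℝ} (hu : Integrable u μ) :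
    Integrable (fun p => u p.1) γ := by
  rw [← hγ.1] at hu
  exact (integrable_map_measure hu.aestronglyMeasurable measurable_fst.aemeasurable).mp hu

theorem integrable_comp_snd (hγ : IsCoupling γ μ ν) {v : Y → ℝ} (hv : Integrable v ν) :
    Integrable (fun p => v p.2) γ := by
  rw [← hγ.2] at hv
  exact (integrable_map_measure hv.aestronglyMeasurable measurable_snd.aemeasurable).mp hv

theorem integral_add_comp (hγ : IsCoupling γ μ ν) {u : X → ℝ} {v : Y → ℝ}
    (hu : Integrable u μ) (hv : Integrable v ν) :
    ∫ p, (u p.1 + v p.2) ∂γ = ∫ x, u x ∂μ + ∫ y, v y ∂ν := by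
  rw [integral_add (hγ.integrable_comp_fst hu) (hγ.integrable_comp_snd hv), ← hγ.1, ← hγ.2,
    integral_map measurable_fst.aemeasurable (hγ.1 ▸ hu.aestronglyMeasurable),
    integral_map measurable_snd.aemeasurable (hγ.2 ▸ hv.aestronglyMeasurable)]

theorem neg_integral_sub_integral_le (hγ : IsCoupling γ μ ν) {c : X × Y → ℝ}
    (hc : Integrable c γ) {u : X → ℝ} {v : Y → ℝ} (hu : Integrable u μ) (hv : Integrable v ν)
    (huv : ∀ x y, -u x - v y ≤ c (x, y)) :
    -∫ x, u x ∂μ - ∫ y, v y ∂ν ≤ ∫ p, c p ∂γ :=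
  calc -∫ x, u x ∂μ - ∫ y, v y ∂ν = ∫ p, -(u p.1 + v p.2) ∂γ := by
        rw [integral_neg, hγ.integral_add_comp hu hv]; ring
    _ ≤ ∫ p, c p ∂γ :=
        integral_mono ((hγ.integrable_comp_fst hu).add (hγ.integrable_comp_snd hv)).neg hc
          fun p => by linarith [huv p.1 p.2]

end IsCoupling

theorem isCoupling_prod {X Y : Type*} [MeasurableSpace X] [MeasurableSpace Y]
    (μ : Measure X) (ν : Measure Y) [IsProbabilityMeasure μ] [IsProbabilityMeasure ν] :
    IsCoupling (μ.prod ν) μ ν :=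
  ⟨Measure.fst_prod, Measure.snd_prod⟩

section Potentials

variable {X Y : Type*} [TopologicalSpace X] [TopologicalSpace Y]

def potentialSum : C(X, ℝ) × C(Y, ℝ) →ₗ[ℝ] C(X × Y, ℝ) where
  toFun w := w.1.comp .fst + w.2.comp .snd
  map_add' _ _ := by ext; simp only [Prod.fst_add, Prod.snd_add, ContinuousMap.add_apply,
    ContinuousMap.comp_apply]; ring
  map_smul' _ _ := by ext; simp only [Prod.smul_fst, Prod.smul_snd, ContinuousMap.add_apply,
    ContinuousMap.comp_apply, ContinuousMap.smul_apply, smul_eq_mul, RingHom.id_apply]; ring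

@[simp]
theorem potentialSum_apply (w : C(X, ℝ) × C(Y, ℝ)) (p : X × Y) :
    potentialSum w p = w.1 p.1 + w.2 p.2 :=
  rfl

variable [CompactSpace X] [CompactSpace Y]

theorem le_potentialSum_norm (f : C(X × Y, ℝ)) :
    f ≤ potentialSum (ContinuousMap.const X ‖f‖, 0) := fun p => by
  simpa using (Real.le_norm_self _).trans (f.norm_coe_le_norm p)

variable [MeasurableSpace X] [MeasurableSpace Y] [OpensMeasurableSpace X] [OpensMeasurableSpace Y]
  (μ : Measure X) (ν : Measure Y) [IsFiniteMeasure μ] [IsFiniteMeasure ν]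

def marginalIntegral : C(X, ℝ) × C(Y, ℝ) →ₗ[ℝ] ℝ where
  toFun w := ∫ x, w.1 x ∂μ + ∫ y, w.2 y ∂ν
  map_add' w w' := by
    simp only [Prod.fst_add, Prod.snd_add, ContinuousMap.add_apply]
    rw [integral_add w.1.integrable_of_compactSpace w'.1.integrable_of_compactSpace,
      integral_add w.2.integrable_of_compactSpace w'.2.integrable_of_compactSpace]
    ring
  map_smul' t w := by
    simp only [Prod.smul_fst, Prod.smul_snd, ContinuousMap.smul_apply, smul_eq_mul,
      integral_const_mul, RingHom.id_apply]
    ring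

@[simp]
theorem marginalIntegral_apply (w : C(X, ℝ) × C(Y, ℝ)) :
    marginalIntegral μ ν w = ∫ x, w.1 x ∂μ + ∫ y, w.2 y ∂ν :=
  rfl

end Potentials

section DualValue

variable {X Y : Type*} [MetricSpace X] [CompactSpace X] [MeasurableSpace X] [BorelSpace X]
  [MetricSpace Y] [CompactSpace Y] [MeasurableSpace Y] [BorelSpace Y]
  (μ : Measure X) (ν : Measure Y) [IsProbabilityMeasure μ] [IsProbabilityMeasure ν]

/-- `-dualValue μ ν (-c)` is the dual supremum over continuous potentials. -/
def dualValue (f : C(X × Y, ℝ)) : ℝ :=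
  sInf (marginalIntegral μ ν '' {w | f ≤ potentialSum w})

variable {μ ν}

theorem integral_le_marginalIntegral {γ : Measure (X × Y)} (hγ : IsCoupling γ μ ν)
    {f : C(X × Y, ℝ)} {w : C(X, ℝ) × C(Y, ℝ)} (hfw : f ≤ potentialSum w) :
    ∫ p, f p ∂γ ≤ marginalIntegral μ ν w := by
  have := hγ.isProbabilityMeasure
  calc ∫ p, f p ∂γ ≤ ∫ p, (w.1 p.1 + w.2 p.2) ∂γ :=
        integral_mono f.integrable_of_compactSpace (potentialSum w).integrable_of_compactSpace hfw
    _ = marginalIntegral μ ν w :=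
        hγ.integral_add_comp w.1.integrable_of_compactSpace w.2.integrable_of_compactSpace

theorem bddBelow_marginalIntegral_image (f : C(X × Y, ℝ)) :
    BddBelow (marginalIntegral μ ν '' {w | f ≤ potentialSum w}) :=
  ⟨∫ p, f p ∂(μ.prod ν), by
    rintro _ ⟨w, hfw, rfl⟩
    exact integral_le_marginalIntegral (isCoupling_prod μ ν) hfw⟩

theorem dualValue_le {f : C(X × Y, ℝ)} {w : C(X, ℝ) × C(Y, ℝ)} (hfw : f ≤ potentialSum w) :
    dualValue μ ν f ≤ marginalIntegral μ ν w :=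
  csInf_le (bddBelow_marginalIntegral_image f) ⟨w, hfw, rfl⟩

theorem le_dualValue {f : C(X × Y, ℝ)} {r : ℝ}
    (h : ∀ w, f ≤ potentialSum w → r ≤ marginalIntegral μ ν w) : r ≤ dualValue μ ν f :=
  le_csInf ⟨_, _, le_potentialSum_norm f, rfl⟩ (forall_mem_image.mpr h)

theorem dualValue_add_le (f g : C(X × Y, ℝ)) :
    dualValue μ ν (f + g) ≤ dualValue μ ν f + dualValue μ ν g := by
  suffices ∀ w', g ≤ potentialSum w' →
      dualValue μ ν (f + g) - marginalIntegral μ ν w' ≤ dualValue μ ν f by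
    linarith [le_dualValue fun w' hw' => sub_le_comm.mp (this w' hw')]
  intro w' hgw'
  refine le_dualValue fun w hfw => sub_le_iff_le_add.mpr ?_
  rw [← map_add]
  exact dualValue_le (by rw [map_add]; exact add_le_add hfw hgw')

theorem dualValue_smul {t : ℝ} (ht : 0 < t) (f : C(X × Y, ℝ)) :
    dualValue μ ν (t • f) = t * dualValue μ ν f := by
  have : {w | t • f ≤ potentialSum w} = t • {w | f ≤ potentialSum w} := by
    ext w
    rw [mem_smul_set_iff_inv_smul_mem₀ ht.ne', mem_ofPred_eq, mem_ofPred_eq, map_smul,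
      le_inv_smul_iff_of_pos ht]
  rw [dualValue, this, image_smul_set, Real.sInf_smul_of_nonneg ht.le, smul_eq_mul, dualValue]

end DualValue

section OptimalPlan

variable {X Y : Type*} [MetricSpace X] [CompactSpace X] [MeasurableSpace X] [BorelSpace X]
  [MetricSpace Y] [CompactSpace Y] [MeasurableSpace Y] [BorelSpace Y]
  {μ : Measure X} {ν : Measure Y} [IsProbabilityMeasure μ] [IsProbabilityMeasure ν]

theorem isCoupling_of_integral_potentialSum {γ : Measure (X × Y)} [IsFiniteMeasure γ]
    (h : ∀ w, ∫ p, potentialSum w p ∂γ = marginalIntegral μ ν w) : IsCoupling γ μ ν := by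
  constructor
  · refine ext_of_forall_integral_eq_of_IsFiniteMeasure fun u => ?_
    rw [integral_map measurable_fst.aemeasurable u.continuous.aestronglyMeasurable]
    simpa using h (u.toContinuousMap, 0)
  · refine ext_of_forall_integral_eq_of_IsFiniteMeasure fun v => ?_
    rw [integral_map measurable_snd.aemeasurable v.continuous.aestronglyMeasurable]
    simpa using h (0, v.toContinuousMap)

theorem exists_isCoupling_integral_eq_neg_dualValue_neg (c : C(X × Y, ℝ)) :
    ∃ γ : Measure (X × Y), IsCoupling γ μ ν ∧ ∫ p, c p ∂γ = -dualValue μ ν (-c) := by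
  obtain ⟨L, hL_le, hL_c⟩ := exists_linearMap_le_sublinear_eq (dualValue μ ν)
    (fun _ ht f => dualValue_smul ht f) dualValue_add_le (-c)
  have hL_nonneg : ∀ f, 0 ≤ f → 0 ≤ L f := fun f hf => by
    have := (hL_le (-f)).trans (dualValue_le (w := 0) (by simpa using hf))
    rw [map_neg, map_zero] at this
    linarith
  have hL_potentialSum : ∀ w, L (potentialSum w) = marginalIntegral μ ν w := fun w => by
    have h₁ := (hL_le (potentialSum w)).trans (dualValue_le le_rfl)
    have h₂ := (hL_le (potentialSum (-w))).trans (dualValue_le le_rfl)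
    simp only [map_neg] at h₂
    linarith
  obtain ⟨γ, _, hγ⟩ := ContinuousMap.exists_measure_integral_eq_of_nonneg L hL_nonneg
  refine ⟨γ, isCoupling_of_integral_potentialSum fun w => (hγ _).trans (hL_potentialSum w), ?_⟩
  rw [hγ, ← hL_c, map_neg, neg_neg]

end OptimalPlan

/-- **Kantorovich–Koopmans duality.**  For compact Polish spaces `M⁺, M⁻`, a continuous
cost `c` and Borel probability measures `μ⁺, μ⁻`, the Kantorovich minimum over transport
plans `γ ∈ Γ(μ⁺,μ⁻)` is attained and equals the dual supremum of
`−∫ u dμ⁺ − ∫ v dμ⁻` over pairs `(−u,−v) ∈ Lip_c`, i.e. over integrable `u, v` with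
`c(x,y) ≥ −u(x) − v(y)` everywhere. -/
theorem kantorovich_duality
    {X Y : Type*} [MetricSpace X] [CompactSpace X] [MeasurableSpace X] [BorelSpace X]
    [MetricSpace Y] [CompactSpace Y] [MeasurableSpace Y] [BorelSpace Y]
    (c : X × Y → ℝ) (hc : Continuous c)
    (μ : Measure X) (ν : Measure Y) [IsProbabilityMeasure μ] [IsProbabilityMeasure ν] :
    ∃ γ : Measure (X × Y), IsCoupling γ μ ν ∧
      (∀ γ' : Measure (X × Y), IsCoupling γ' μ ν → ∫ p, c p ∂γ ≤ ∫ p, c p ∂γ') ∧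
      ∫ p, c p ∂γ =
        sSup {r : ℝ | ∃ u : X → ℝ, ∃ v : Y → ℝ, Integrable u μ ∧ Integrable v ν ∧
          (∀ x : X, ∀ y : Y, -u x - v y ≤ c (x, y)) ∧
          r = -∫ x, u x ∂μ - ∫ y, v y ∂ν} := by
  set D := {r : ℝ | ∃ u : X → ℝ, ∃ v : Y → ℝ, Integrable u μ ∧ Integrable v ν ∧
    (∀ x : X, ∀ y : Y, -u x - v y ≤ c (x, y)) ∧ r = -∫ x, u x ∂μ - ∫ y, v y ∂ν}
  let cM : C(X × Y, ℝ) := ⟨c, hc⟩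
  have weak_duality : ∀ γ', IsCoupling γ' μ ν → ∀ r ∈ D, r ≤ ∫ p, c p ∂γ' := by
    rintro γ' hγ' r ⟨u, v, hu, hv, huv, rfl⟩
    have := hγ'.isProbabilityMeasure
    exact hγ'.neg_integral_sub_integral_le cM.integrable_of_compactSpace hu hv huv
  have mem_D : ∀ w, -cM ≤ potentialSum w → -marginalIntegral μ ν w ∈ D := fun w hw =>
    ⟨w.1, w.2, w.1.integrable_of_compactSpace, w.2.integrable_of_compactSpace,
      fun x y => by linarith [show -c (x, y) ≤ w.1 x + w.2 y from hw (x, y)],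
      by rw [marginalIntegral_apply]; ring⟩
  have hD : BddAbove D := ⟨_, weak_duality _ (isCoupling_prod μ ν)⟩
  have sSup_le_integral : ∀ γ', IsCoupling γ' μ ν → sSup D ≤ ∫ p, c p ∂γ' := fun γ' hγ' =>
    csSup_le ⟨_, mem_D _ (le_potentialSum_norm (-cM))⟩ (weak_duality γ' hγ')
  obtain ⟨γ, hγ, hγc⟩ := exists_isCoupling_integral_eq_neg_dualValue_neg (μ := μ) (ν := ν) cM
  have integral_le_sSup : ∫ p, c p ∂γ ≤ sSup D := by
    refine hγc.trans_le (neg_le.mpr ?_)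
    exact le_dualValue fun w hw => neg_le.mp (le_csSup hD (mem_D w hw))
  exact ⟨γ, hγ, fun γ' hγ' => integral_le_sSup.trans (sSup_le_integral γ' hγ'),
    integral_le_sSup.antisymm (sSup_le_integral γ hγ)⟩
end
end

section
/- Let X ⊂ ℝ^m and Y ⊂ ℝⁿ be compact convex sets and P ∈ C(X × Y). If for each (x₀,y₀) ∈ X × Y the function x ∈ X ↦ P(x,y₀) is convex and the function y ∈ Y ↦ −P(x₀,y) is convex, then inf_{x ∈ X} sup_{y ∈ Y} P(x,y) = sup_{y ∈ Y} inf_{x ∈ X} P(x,y). -/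
/-!
Sion's theorem (`Sion.exists_isSaddlePointOn`) provides a saddle point `(a, b)` of `P` on
`X × Y`. At a saddle point both iterated extrema equal `P a b`; in `ℝ` this needs the
slices of `P` to be bounded, which holds as they are continuous on compact sets.
-/

open Set

section SaddlePoint

variable {E F β : Type*} [ConditionallyCompleteLinearOrder β]
  {X : Set E} {Y : Set F} {f : E → F → β} {a : E} {b : F}

theorem IsSaddlePointOn.csInf_image_csSup_image_eq (h : IsSaddlePointOn X Y f a b)
    (ha : a ∈ X) (hb : b ∈ Y) (hbdd : ∀ x ∈ X, BddAbove ((fun y => f x y) '' Y)) :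
    sInf ((fun x => sSup ((fun y => f x y) '' Y)) '' X) = f a b := by
  have hmax : ∀ x ∈ X, f x b ≤ sSup ((fun y => f x y) '' Y) := fun x hx =>
    le_csSup (hbdd x hx) (mem_image_of_mem _ hb)
  have hvalue : sSup ((fun y => f a y) '' Y) = f a b :=
    IsGreatest.csSup_eq ⟨mem_image_of_mem _ hb, forall_mem_image.2 fun y hy => h a ha y hy⟩
  refine IsLeast.csInf_eq ⟨⟨a, ha, hvalue⟩, forall_mem_image.2 fun x hx => ?_⟩
  exact (h x hx b hb).trans (hmax x hx)

theorem IsSaddlePointOn.csSup_image_csInf_image_eq (h : IsSaddlePointOn X Y f a b)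
    (ha : a ∈ X) (hb : b ∈ Y) (hbdd : ∀ y ∈ Y, BddBelow ((fun x => f x y) '' X)) :
    sSup ((fun y => sInf ((fun x => f x y) '' X)) '' Y) = f a b := by
  have hmin : ∀ y ∈ Y, sInf ((fun x => f x y) '' X) ≤ f a y := fun y hy =>
    csInf_le (hbdd y hy) (mem_image_of_mem _ ha)
  have hvalue : sInf ((fun x => f x b) '' X) = f a b :=
    IsLeast.csInf_eq ⟨mem_image_of_mem _ ha, forall_mem_image.2 fun x hx => h x hx b hb⟩
  refine IsGreatest.csSup_eq ⟨⟨b, hb, hvalue⟩, forall_mem_image.2 fun y hy => ?_⟩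
  exact (hmin y hy).trans (h a ha y hy)

end SaddlePoint

/-- **Von Neumann's convex/concave min-max theorem.**  If `X ⊆ ℝᵐ` and `Y ⊆ ℝⁿ` are
nonempty compact convex sets and `P` is a continuous payoff function on `X × Y` which is
convex in `x` for each fixed `y₀ ∈ Y` and concave in `y` for each fixed `x₀ ∈ X`, then
`inf_{x ∈ X} sup_{y ∈ Y} P(x,y) = sup_{y ∈ Y} inf_{x ∈ X} P(x,y)`. -/
theorem vonNeumann_minimax {m n : ℕ}
    (X : Set (EuclideanSpace ℝ (Fin m))) (Y : Set (EuclideanSpace ℝ (Fin n)))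
    (hXc : IsCompact X) (hXconv : Convex ℝ X) (hXne : X.Nonempty)
    (hYc : IsCompact Y) (hYconv : Convex ℝ Y) (hYne : Y.Nonempty)
    (P : EuclideanSpace ℝ (Fin m) → EuclideanSpace ℝ (Fin n) → ℝ)
    (hP : ContinuousOn (Function.uncurry P) (X ×ˢ Y))
    (hPx : ∀ y₀ ∈ Y, ConvexOn ℝ X fun x => P x y₀)
    (hPy : ∀ x₀ ∈ X, ConcaveOn ℝ Y fun y => P x₀ y) :
    sInf ((fun x => sSup ((fun y => P x y) '' Y)) '' X) =
      sSup ((fun y => sInf ((fun x => P x y) '' X)) '' Y) := by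
  have hcont_x : ∀ y ∈ Y, ContinuousOn (fun x => P x y) X := fun y hy => hP.uncurry_right y hy
  have hcont_y : ∀ x ∈ X, ContinuousOn (P x) Y := fun x hx => hP.uncurry_left x hx
  obtain ⟨a, ha, b, hb, hab⟩ := Sion.exists_isSaddlePointOn hXne hXconv hXc
    (fun y hy => (hcont_x y hy).lowerSemicontinuousOn) (fun y hy => (hPx y hy).quasiconvexOn)
    hYconv hYne hYc (fun x hx => (hcont_y x hx).upperSemicontinuousOn)
    (fun x hx => (hPy x hx).quasiconcaveOn)
  rw [hab.csInf_image_csSup_image_eq ha hb fun x hx => hYc.bddAbove_image (hcont_y x hx),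
    hab.csSup_image_csInf_image_eq ha hb fun y hy => hXc.bddBelow_image (hcont_x y hy)]
end

section
/- Let M⁺ and M⁻ be n-dimensional manifolds, at least in a neighbourhood U of a point (x₀,y₀) ∈ M⁺ × M⁻, and suppose c ∈ C²(U) satisfies the non-degeneracy condition (A2): det D²_{x^i y^j} c(x₀,y₀) ≠ 0. If S ⊂ M⁺ × M⁻ is c-cyclically monotone, then there is a neighbourhood V ⊂ U of (x₀,y₀) such that S ∩ V is contained in an n-dimensional Lipschitz submanifold of M⁺ × M⁻. -/
/-!
Testing `c`-cyclical monotonicity on pairs only: for `(x₁, y₁), (x₂, y₂) ∈ S` the mixed second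
difference `c(x₁,y₁) - c(x₁,y₂) - c(x₂,y₁) + c(x₂,y₂)` is `≤ 0`. By the mean value inequality it
equals `⟪x₁ - x₂, N (y₁ - y₂)⟫` up to an error `ε ‖x₁ - x₂‖ ‖y₁ - y₂‖` near `(x₀, y₀)`, where `N` is
the operator of the mixed Hessian, invertible by (A2). With `a = x₁ - x₂`, `b = N (y₁ - y₂)`
this gives `⟪a, b⟫ ≤ ‖a‖ ‖b‖ / 2`, hence `‖a + b‖ ≤ 2 ‖a - b‖`: in the coordinates
`(x - N y, x + N y)`, `S` is locally a `2`-Lipschitz graph, and a Lipschitz graph over a subset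
extends to one over the whole plane.
-/

open Set
open scoped NNReal

noncomputable section

/-- `ℝⁿ`, coordinates for the `n`-dimensional manifolds `M⁺` and `M⁻`. -/
abbrev E (n : ℕ) := EuclideanSpace ℝ (Fin n)

/-- `S` is `c`-cyclically monotone. -/
def CCyclicallyMonotone {X Y : Type*} (c : X × Y → ℝ) (S : Set (X × Y)) : Prop :=
  ∀ (k : ℕ) (p : Fin k → X × Y), (∀ i, p i ∈ S) → ∀ σ : Equiv.Perm (Fin k),
    ∑ i, c (p i) ≤ ∑ i, c ((p i).1, (p (σ i)).2)

/-- The matrix of mixed second partials `D²_{xⁱ yʲ} c` at `(x₀,y₀)`. -/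
def mixedHessian {n : ℕ} (c : E n × E n → ℝ) (x₀ y₀ : E n) : Matrix (Fin n) (Fin n) ℝ :=
  Matrix.of fun i j =>
    fderiv ℝ (fun y' => fderiv ℝ (fun x' => c (x', y')) x₀ (EuclideanSpace.single i 1)) y₀
      (EuclideanSpace.single j 1)

open scoped RealInnerProductSpace Topology

theorem norm_add_le_two_mul_norm_sub_of_inner_le {F : Type*} [NormedAddCommGroup F]
    [InnerProductSpace ℝ F] {a b : F} (h : ⟪a, b⟫ ≤ ‖a‖ * ‖b‖ / 2) :
    ‖a + b‖ ≤ 2 * ‖a - b‖ := by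
  have hadd := norm_add_sq_real a b
  have hsub := norm_sub_sq_real a b
  nlinarith [norm_nonneg (a + b), norm_nonneg (a - b), sq_nonneg (‖a‖ - ‖b‖)]

theorem exists_lipschitzWith_subset_graph {α β : Type*} [PseudoMetricSpace α]
    [NormedAddCommGroup β] [NormedSpace ℝ β] [FiniteDimensional ℝ β] {T : Set (α × β)} {K : ℝ≥0}
    (hT : ∀ p ∈ T, ∀ q ∈ T, dist p.2 q.2 ≤ K * dist p.1 q.1) :
    ∃ (K' : ℝ≥0) (f : α → β), LipschitzWith K' f ∧ T ⊆ {p | p.2 = f p.1} := by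
  classical
  let f₀ : α → β := fun x => if h : x ∈ Prod.fst '' T then h.choose.2 else 0
  have hgraph : ∀ p ∈ T, p.2 = f₀ p.1 := by
    intro p hp
    have hex : p.1 ∈ Prod.fst '' T := ⟨p, hp, rfl⟩
    obtain ⟨hqT, hq⟩ := hex.choose_spec
    have h := hT _ hqT _ hp
    rw [hq, dist_self, mul_zero, dist_le_zero] at h
    simp only [f₀, dif_pos hex, h]
  have hf₀ : LipschitzOnWith K f₀ (Prod.fst '' T) := by
    refine LipschitzOnWith.of_dist_le_mul ?_
    rintro _ ⟨p, hp, rfl⟩ _ ⟨q, hq, rfl⟩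
    rw [← hgraph p hp, ← hgraph q hq]
    exact hT p hp q hq
  obtain ⟨f, hf, hf₀f⟩ := hf₀.extend_finite_dimension
  exact ⟨_, f, hf, fun p hp => (hgraph p hp).trans (hf₀f ⟨p, hp, rfl⟩)⟩


namespace ContinuousLinearEquiv

variable {X Y : Type*} [NormedAddCommGroup X] [NormedSpace ℝ X] [NormedAddCommGroup Y]
  [NormedSpace ℝ Y]

def subAddProd (N : Y ≃L[ℝ] X) : (X × Y) ≃L[ℝ] (X × X) :=
  equivOfInverse
    ((ContinuousLinearMap.fst ℝ X Y - (N : Y →L[ℝ] X).comp (ContinuousLinearMap.snd ℝ X Y)).prod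
      (ContinuousLinearMap.fst ℝ X Y + (N : Y →L[ℝ] X).comp (ContinuousLinearMap.snd ℝ X Y)))
    (((2 : ℝ)⁻¹ • (ContinuousLinearMap.fst ℝ X X + ContinuousLinearMap.snd ℝ X X)).prod
      ((N.symm : X →L[ℝ] Y).comp
        ((2 : ℝ)⁻¹ • (ContinuousLinearMap.snd ℝ X X - ContinuousLinearMap.fst ℝ X X))))
    (fun p => by ext <;> simp <;> module)
    (fun p => by ext <;> simp <;> module)

@[simp]
theorem subAddProd_apply (N : Y ≃L[ℝ] X) (p : X × Y) :
    subAddProd N p = (p.1 - N p.2, p.1 + N p.2) := rfl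

end ContinuousLinearEquiv

theorem norm_mixed_difference_sub_le {X Y G : Type*} [NormedAddCommGroup X] [NormedSpace ℝ X]
    [NormedAddCommGroup Y] [NormedSpace ℝ Y] [NormedAddCommGroup G] [NormedSpace ℝ G]
    {c : X × Y → G} {c' : X × Y → X × Y →L[ℝ] G} {c'' : X × Y → X × Y →L[ℝ] X × Y →L[ℝ] G}
    {B : X × Y →L[ℝ] X × Y →L[ℝ] G} {s : Set X} {t : Set Y} {ε : ℝ}
    (hs : Convex ℝ s) (ht : Convex ℝ t)
    (hc : ∀ p ∈ s ×ˢ t, HasFDerivAt c (c' p) p) (hc' : ∀ p ∈ s ×ˢ t, HasFDerivAt c' (c'' p) p)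
    (hB : ∀ p ∈ s ×ˢ t, ‖c'' p - B‖ ≤ ε)
    {x₁ x₂ : X} {y₁ y₂ : Y} (hx₁ : x₁ ∈ s) (hx₂ : x₂ ∈ s) (hy₁ : y₁ ∈ t) (hy₂ : y₂ ∈ t) :
    ‖c (x₁, y₁) - c (x₁, y₂) - c (x₂, y₁) + c (x₂, y₂) - B (0, y₁ - y₂) (x₁ - x₂, 0)‖ ≤
      ε * ‖y₁ - y₂‖ * ‖x₁ - x₂‖ := by
  have partial_y : ∀ x ∈ s, ‖c' (x, y₁) - c' (x, y₂) - B (0, y₁ - y₂)‖ ≤ ε * ‖y₁ - y₂‖ := by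
    intro x hx
    refine ht.norm_image_sub_le_of_norm_hasFDerivWithin_le'
      (f := fun y => c' (x, y)) (f' := fun y => (c'' (x, y)).comp (.inr ℝ X Y))
      (φ := B.comp (.inr ℝ X Y))
      (fun y hy => ((hc' _ ⟨hx, hy⟩).comp y (hasFDerivAt_prodMk_right x y)).hasFDerivWithinAt)
      (fun y hy => ?_) hy₂ hy₁
    grw [← ContinuousLinearMap.sub_comp, ContinuousLinearMap.opNorm_comp_le,
      ContinuousLinearMap.norm_inr_le_one, mul_one, hB _ ⟨hx, hy⟩]
  have partial_xy := hs.norm_image_sub_le_of_norm_hasFDerivWithin_le'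
    (f := fun x => c (x, y₁) - c (x, y₂))
    (f' := fun x => (c' (x, y₁) - c' (x, y₂)).comp (.inl ℝ X Y))
    (φ := (B (0, y₁ - y₂)).comp (.inl ℝ X Y)) (C := ε * ‖y₁ - y₂‖)
    (fun x hx => (((hc (x, y₁) ⟨hx, hy₁⟩).comp x (hasFDerivAt_prodMk_left x y₁)).sub
      ((hc (x, y₂) ⟨hx, hy₂⟩).comp x (hasFDerivAt_prodMk_left x y₂))).hasFDerivWithinAt)
    (fun x hx => by
      grw [← ContinuousLinearMap.sub_comp, ContinuousLinearMap.opNorm_comp_le,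
        ContinuousLinearMap.norm_inl_le_one, mul_one, partial_y x hx])
    hx₂ hx₁
  convert partial_xy using 2
  simp only [ContinuousLinearMap.comp_apply, ContinuousLinearMap.inl_apply]
  abel

theorem ContDiffAt.exists_nhds_norm_mixed_difference_sub_le {X Y G : Type*}
    [NormedAddCommGroup X] [NormedSpace ℝ X] [NormedAddCommGroup Y] [NormedSpace ℝ Y]
    [NormedAddCommGroup G] [NormedSpace ℝ G] {c : X × Y → G} {x₀ : X} {y₀ : Y}
    (hc : ContDiffAt ℝ 2 c (x₀, y₀)) {ε : ℝ} (hε : 0 < ε) :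
    ∃ V ∈ 𝓝 (x₀, y₀), ∀ p ∈ V, ∀ q ∈ V,
      ‖c p - c (p.1, q.2) - c (q.1, p.2) + c q -
          fderiv ℝ (fderiv ℝ c) (x₀, y₀) (0, p.2 - q.2) (p.1 - q.1, 0)‖ ≤
        ε * ‖p.2 - q.2‖ * ‖p.1 - q.1‖ := by
  have hC2 : ∀ᶠ p in 𝓝 (x₀, y₀), ContDiffAt ℝ 2 c p := hc.eventually (by simp)
  have hclose : ∀ᶠ p in 𝓝 (x₀, y₀),
      ‖fderiv ℝ (fderiv ℝ c) p - fderiv ℝ (fderiv ℝ c) (x₀, y₀)‖ < ε := by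
    have hcont := ((hc.fderiv_right (m := 1) le_rfl).fderiv_right (m := 0) le_rfl).continuousAt
    simpa only [Metric.mem_ball, dist_eq_norm] using hcont.eventually (Metric.ball_mem_nhds _ hε)
  obtain ⟨r, hr, hball⟩ := Metric.eventually_nhds_iff_ball.1 (hC2.and hclose)
  rw [← ball_prod_same] at hball
  refine ⟨_, Metric.ball_mem_nhds _ hr, ?_⟩
  rw [← ball_prod_same]
  rintro ⟨x₁, y₁⟩ ⟨hx₁, hy₁⟩ ⟨x₂, y₂⟩ ⟨hx₂, hy₂⟩
  exact norm_mixed_difference_sub_le (convex_ball x₀ r) (convex_ball y₀ r)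
    (fun p hp => ((hball p hp).1.differentiableAt (by norm_num)).hasFDerivAt)
    (fun p hp => (((hball p hp).1.fderiv_right (m := 1) le_rfl).differentiableAt
      (by norm_num)).hasFDerivAt)
    (fun p hp => (hball p hp).2.le) hx₁ hx₂ hy₁ hy₂

theorem fderiv_fderiv_comp_prodMk_apply {X Y G : Type*}
    [NormedAddCommGroup X] [NormedSpace ℝ X] [NormedAddCommGroup Y] [NormedSpace ℝ Y]
    [NormedAddCommGroup G] [NormedSpace ℝ G] {c : X × Y → G} {x₀ : X} {y₀ : Y}
    (hc : ∀ᶠ p in 𝓝 (x₀, y₀), DifferentiableAt ℝ c p)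
    (hc' : DifferentiableAt ℝ (fderiv ℝ c) (x₀, y₀)) (u : X) (v : Y) :
    fderiv ℝ (fun y => fderiv ℝ (fun x => c (x, y)) x₀ u) y₀ v =
      fderiv ℝ (fderiv ℝ c) (x₀, y₀) (0, v) (u, 0) := by
  have hpartial : (fun y => fderiv ℝ (fun x => c (x, y)) x₀ u) =ᶠ[𝓝 y₀]
      fun y => fderiv ℝ c (x₀, y) (u, 0) := by
    filter_upwards [(Continuous.prodMk_right x₀).continuousAt.eventually hc] with y hy
    have h : HasFDerivAt (fun x => c (x, y)) ((fderiv ℝ c (x₀, y)).comp (.inl ℝ X Y)) x₀ :=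
      hy.hasFDerivAt.comp x₀ (hasFDerivAt_prodMk_left x₀ y)
    rw [h.fderiv]
    rfl
  have h : HasFDerivAt (fun y => fderiv ℝ c (x₀, y) (u, 0))
      ((ContinuousLinearMap.apply ℝ G (u, 0)).comp
        ((fderiv ℝ (fderiv ℝ c) (x₀, y₀)).comp (.inr ℝ X Y))) y₀ :=
    (ContinuousLinearMap.apply ℝ G ((u, 0) : X × Y)).hasFDerivAt.comp y₀
      (hc'.hasFDerivAt.comp y₀ (hasFDerivAt_prodMk_right x₀ y₀))
  rw [hpartial.fderiv_eq, h.fderiv]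
  rfl

theorem EuclideanSpace.apply_eq_inner_toEuclideanLin {ι : Type*} [Fintype ι] [DecidableEq ι]
    (β : EuclideanSpace ℝ ι →L[ℝ] EuclideanSpace ℝ ι →L[ℝ] ℝ) (x y : EuclideanSpace ℝ ι) :
    β y x = ⟪x, Matrix.toEuclideanLin
      (Matrix.of fun i j => β (EuclideanSpace.single j 1) (EuclideanSpace.single i 1)) y⟫ := by
  conv_lhs => rw [← (EuclideanSpace.basisFun ι ℝ).sum_repr x,
    ← (EuclideanSpace.basisFun ι ℝ).sum_repr y]
  simp only [EuclideanSpace.basisFun_repr, EuclideanSpace.basisFun_apply, map_sum, map_smul,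
    sum_apply, smul_apply, smul_eq_mul, Finset.mul_sum,
    Finset.sum_mul, Matrix.toLpLin_apply, PiLp.inner_apply, Matrix.mulVec, dotProduct,
    Matrix.of_apply, RCLike.inner_apply, Real.ringHom_apply]
  exact Finset.sum_congr rfl fun i _ => Finset.sum_congr rfl fun j _ => by ring

theorem exists_fderiv_fderiv_eq_inner_of_det_mixedHessian_ne_zero {n : ℕ}
    {c : E n × E n → ℝ} {x₀ y₀ : E n} (hc : ContDiffAt ℝ 2 c (x₀, y₀))
    (hA2 : (mixedHessian c x₀ y₀).det ≠ 0) :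
    ∃ N : E n ≃L[ℝ] E n, ∀ x y, fderiv ℝ (fderiv ℝ c) (x₀, y₀) (0, y) (x, 0) = ⟪x, N y⟫ := by
  set B := fderiv ℝ (fderiv ℝ c) (x₀, y₀)
  have hM : mixedHessian c x₀ y₀ = Matrix.of fun i j =>
      B (0, EuclideanSpace.single j 1) (EuclideanSpace.single i 1, 0) := by
    ext i j
    exact fderiv_fderiv_comp_prodMk_apply
      ((hc.eventually (by simp)).mono fun p hp => hp.differentiableAt (by norm_num))
      ((hc.fderiv_right (m := 1) le_rfl).differentiableAt one_ne_zero) _ _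
  have hdet : LinearMap.det (Matrix.toEuclideanLin (mixedHessian c x₀ y₀)) ≠ 0 := by
    rwa [Matrix.toEuclideanLin_eq_toLin_orthonormal, LinearMap.det_toLin]
  refine ⟨(LinearMap.equivOfDetNeZero _ hdet).toContinuousLinearEquiv, fun x y => ?_⟩
  change _ = ⟪x, Matrix.toEuclideanLin (mixedHessian c x₀ y₀) y⟫
  rw [hM]
  exact EuclideanSpace.apply_eq_inner_toEuclideanLin
    (B.bilinearComp (.inr ℝ (E n) (E n)) (.inl ℝ (E n) (E n))) x y

theorem CCyclicallyMonotone.add_le_add_swap {X Y : Type*} {c : X × Y → ℝ} {S : Set (X × Y)}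
    (hS : CCyclicallyMonotone c S) {p q : X × Y} (hp : p ∈ S) (hq : q ∈ S) :
    c p + c q ≤ c (p.1, q.2) + c (q.1, p.2) := by
  simpa [Fin.sum_univ_two] using hS 2 ![p, q] (by simp [Fin.forall_fin_two, hp, hq]) (.swap 0 1)

theorem CCyclicallyMonotone.exists_nhds_dist_subAddProd_le {X Y : Type*} [NormedAddCommGroup X]
    [InnerProductSpace ℝ X] [NormedAddCommGroup Y] [NormedSpace ℝ Y] {c : X × Y → ℝ} {x₀ : X}
    {y₀ : Y} {S : Set (X × Y)} (hS : CCyclicallyMonotone c S) (hc : ContDiffAt ℝ 2 c (x₀, y₀))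
    (N : Y ≃L[ℝ] X) (hN : ∀ x y, fderiv ℝ (fderiv ℝ c) (x₀, y₀) (0, y) (x, 0) = ⟪x, N y⟫) :
    ∃ V ∈ 𝓝 (x₀, y₀), ∀ p ∈ S ∩ V, ∀ q ∈ S ∩ V,
      dist (N.subAddProd p).2 (N.subAddProd q).2 ≤
        2 * dist (N.subAddProd p).1 (N.subAddProd q).1 := by
  set K := ‖(N.symm : X →L[ℝ] Y)‖
  -- chosen so that `ε * ‖y₁ - y₂‖ ≤ ‖N (y₁ - y₂)‖ / 2`
  set ε := (2 * K + 1)⁻¹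
  obtain ⟨V, hV, hmixed⟩ := hc.exists_nhds_norm_mixed_difference_sub_le (ε := ε) (by positivity)
  refine ⟨V, hV, ?_⟩
  rintro ⟨x₁, y₁⟩ ⟨hp, hpV⟩ ⟨x₂, y₂⟩ ⟨hq, hqV⟩
  have hmono := hS.add_le_add_swap hp hq
  have hest := hmixed _ hpV _ hqV
  rw [hN, Real.norm_eq_abs] at hest
  have hy : ‖y₁ - y₂‖ ≤ K * ‖N (y₁ - y₂)‖ := by
    simpa using (N.symm : X →L[ℝ] Y).le_opNorm (N (y₁ - y₂))
  have hεK : ε * K ≤ 1 / 2 := by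
    rw [inv_mul_le_iff₀ (by positivity)]
    linarith
  have hinner : ⟪x₁ - x₂, N (y₁ - y₂)⟫ ≤ ‖x₁ - x₂‖ * ‖N (y₁ - y₂)‖ / 2 := calc
    _ ≤ ε * ‖y₁ - y₂‖ * ‖x₁ - x₂‖ := by linarith [(abs_le.1 hest).1]
    _ ≤ ε * (K * ‖N (y₁ - y₂)‖) * ‖x₁ - x₂‖ := by gcongr
    _ = (ε * K) * (‖x₁ - x₂‖ * ‖N (y₁ - y₂)‖) := by ring
    _ ≤ 1 / 2 * (‖x₁ - x₂‖ * ‖N (y₁ - y₂)‖) := by gcongr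
    _ = _ := by ring
  have := norm_add_le_two_mul_norm_sub_of_inner_le hinner
  rw [map_sub] at this
  simpa only [ContinuousLinearEquiv.subAddProd_apply, dist_eq_norm, add_sub_add_comm,
    sub_sub_sub_comm] using this


theorem rectifiability_of_optimal_transport_general {n : ℕ}
    (c : E n × E n → ℝ) (x₀ y₀ : E n) (U : Set (E n × E n))
    (hU : U ∈ nhds (x₀, y₀))
    (hc : ContDiffOn ℝ 2 c U)
    (hA2 : (mixedHessian c x₀ y₀).det ≠ 0)
    (S : Set (E n × E n)) (hS : CCyclicallyMonotone c S) :
    ∃ V ∈ nhds (x₀, y₀), V ⊆ U ∧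
      ∃ (L : (E n × E n) ≃L[ℝ] (E n × E n)) (K : ℝ≥0) (f : E n → E n),
        LipschitzWith K f ∧ S ∩ V ⊆ L '' {p : E n × E n | p.2 = f p.1} := by
  have hc₀ : ContDiffAt ℝ 2 c (x₀, y₀) := hc.contDiffAt hU
  obtain ⟨N, hN⟩ := exists_fderiv_fderiv_eq_inner_of_det_mixedHessian_ne_zero hc₀ hA2
  obtain ⟨V, hV, hNV⟩ := hS.exists_nhds_dist_subAddProd_le hc₀ N hN
  obtain ⟨K, f, hf, hgraph⟩ := exists_lipschitzWith_subset_graph (K := 2)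
    (T := N.subAddProd '' (S ∩ V)) (by
      rintro _ ⟨p, hp, rfl⟩ _ ⟨q, hq, rfl⟩
      exact_mod_cast hNV p hp q hq)
  refine ⟨V ∩ U, Filter.inter_mem hV hU, inter_subset_right, N.subAddProd.symm, K, f, hf, ?_⟩
  rintro p ⟨hpS, hpV, -⟩
  exact ⟨N.subAddProd p, hgraph ⟨p, ⟨hpS, hpV⟩, rfl⟩, N.subAddProd.symm_apply_apply p⟩

/-- **Rectifiability of optimal transport (McCann–Pass–Warren).**  If `c ∈ C²(U)` near
`(x₀,y₀)` is non-degenerate there, `det D²_{xy} c(x₀,y₀) ≠ 0` (A2), and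
`S ⊆ M⁺ × M⁻` is `c`-cyclically monotone, then there is a neighbourhood `V ⊆ U` of
`(x₀,y₀)` such that `S ∩ V` lies in an `n`-dimensional Lipschitz submanifold: in suitable
linear coordinates on `ℝⁿ × ℝⁿ`, it is contained in the graph of a Lipschitz map defined
on an `n`-dimensional coordinate plane. -/
theorem rectifiability_of_optimal_transport {n : ℕ}
    (c : E n × E n → ℝ) (x₀ y₀ : E n) (U : Set (E n × E n))
    (hU : U ∈ nhds (x₀, y₀)) (hUopen : IsOpen U)
    (hc : ContDiffOn ℝ 2 c U)
    (hA2 : (mixedHessian c x₀ y₀).det ≠ 0)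
    (S : Set (E n × E n)) (hS : CCyclicallyMonotone c S) :
    ∃ V ∈ nhds (x₀, y₀), V ⊆ U ∧
      ∃ (L : (E n × E n) ≃L[ℝ] (E n × E n)) (K : ℝ≥0) (f : E n → E n),
        LipschitzWith K f ∧ S ∩ V ⊆ L '' {p : E n × E n | p.2 = f p.1} :=
  rectifiability_of_optimal_transport_general c x₀ y₀ U hU hc hA2 S hS
end
end
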